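/- Fix k ≥ 1. Let the circle group S¹ = {λ ∈ ℂ : |λ| = 1} act on the unit sphere S^{2k+1} ⊂ ℂ^{k+1} with weight vector w = (2, …, 2, 1), i.e. λ · (z₁, …, z_k, z_{k+1}) = (λ²z₁, …, λ²z_k, λ z_{k+1}). Then the orbit space CP^k_w = S^{2k+1}/S¹, equipped with the quotient topology, is homeomorphic to the complex projective space ℂP^k. -/

import Mathlib

noncomputable section

/-- The unit sphere `S^{2k+1}` inside `ℂ^{k+1}`. -/
abbrev ComplexUnitSphere (k : ℕ) : Type :=
  Metric.sphere (0 : EuclideanSpace ℂ (Fin (k + 1))) 1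

/-- The weighted circle action with weight vector `w = (2, …, 2, 1)` on `ℂ^{k+1}`:
`λ · (z₁, …, z_k, z_{k+1}) = (λ²z₁, …, λ²z_k, λ z_{k+1})`. -/
def weightedSmul (k : ℕ) (c : Circle) (z : EuclideanSpace ℂ (Fin (k + 1))) :
    EuclideanSpace ℂ (Fin (k + 1)) :=
  WithLp.toLp 2 (fun j => (if j = Fin.last k then (c : ℂ) else (c : ℂ) ^ 2) * z j)

/-- The standard diagonal circle action on `ℂ^{k+1}`:
`λ · (z₁, …, z_{k+1}) = (λz₁, …, λz_{k+1})`. -/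
def diagonalSmul (k : ℕ) (c : Circle) (z : EuclideanSpace ℂ (Fin (k + 1))) :
    EuclideanSpace ℂ (Fin (k + 1)) :=
  WithLp.toLp 2 (fun j => (c : ℂ) * z j)

/-- The orbit equivalence relation on `S^{2k+1}` for the weighted action with
weight vector `(2, …, 2, 1)`. -/
def weightedOrbitRel (k : ℕ) (z w : ComplexUnitSphere k) : Prop :=
  ∃ c : Circle, (w : EuclideanSpace ℂ (Fin (k + 1))) = weightedSmul k c (z : EuclideanSpace ℂ (Fin (k + 1)))

/-- The orbit equivalence relation on `S^{2k+1}` for the standard diagonal action. -/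
def diagonalOrbitRel (k : ℕ) (z w : ComplexUnitSphere k) : Prop :=
  ∃ c : Circle, (w : EuclideanSpace ℂ (Fin (k + 1))) = diagonalSmul k c (z : EuclideanSpace ℂ (Fin (k + 1)))

/-- The weighted projective space `CP^k_w` with `w = (2, …, 2, 1)`, as the orbit space
`S^{2k+1}/S¹` with the quotient topology. -/
abbrev WeightedProjectiveSpace (k : ℕ) : Type :=
  Quot (weightedOrbitRel k)

/-- The complex projective space `ℂP^k`, as the quotient of `S^{2k+1}` by the standard
diagonal circle action, with the quotient topology. -/
abbrev ComplexProjectiveSpace (k : ℕ) : Type :=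
  Quot (diagonalOrbitRel k)

/-!
The map `z ↦ z² / |z|` doubles the argument of a complex number and keeps its modulus, so
applying it to the last coordinate gives a continuous surjection `S^{2k+1} → S^{2k+1}` that
carries the weighted action of `λ` to the diagonal action of `λ²`. Two points have the same
image up to the diagonal action exactly when they lie in one weighted orbit, since the square
roots of `λ²` are `±λ` and `-λ` acts as `λ` composed with `-1` on the last coordinate only.
A continuous surjection from a compact space onto a Hausdorff one is a quotient map, so the
induced bijection of orbit spaces is a homeomorphism.
-/

open Complex Topology

def Topology.IsQuotientMap.quotHomeomorph {X Y : Type*} [TopologicalSpace X]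
    [TopologicalSpace Y] {r : X → X → Prop} {s : Y → Y → Prop} {f : X → Y}
    (hf : IsQuotientMap f) (hs : Equivalence s) (hrs : ∀ x y, r x y ↔ s (f x) (f y)) :
    Quot r ≃ₜ Quot s := by
  have hg : IsQuotientMap (Quot.mk s ∘ f) := isQuotientMap_quot_mk.comp hf
  let F : Quot r → Quot s := Quot.lift (Quot.mk s ∘ f) fun x y h => Quot.sound ((hrs x y).1 h)
  have hF : Function.Bijective F := by
    refine ⟨fun a b => ?_, fun b => ?_⟩
    · induction a using Quot.ind with | _ x =>
      induction b using Quot.ind with | _ y =>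
      intro h
      exact Quot.sound ((hrs x y).2 (hs.eqvGen_iff.1 (Quot.eqvGen_exact h)))
    · obtain ⟨x, rfl⟩ := hg.surjective b
      exact ⟨Quot.mk r x, rfl⟩
  refine
    { toEquiv := Equiv.ofBijective F hF
      continuous_toFun := continuous_quot_lift _ hg.continuous
      continuous_invFun := hg.continuous_iff.2 ?_ }
  have : (Equiv.ofBijective F hF).symm ∘ (Quot.mk s ∘ f) = Quot.mk r :=
    funext fun x => (Equiv.ofBijective F hF).symm_apply_apply (Quot.mk r x)
  simpa only [Equiv.invFun_as_coe, this] using continuous_quot_mk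

lemma Circle.exists_sq_eq (μ : Circle) : ∃ c : Circle, c ^ 2 = μ := by
  obtain ⟨θ, rfl⟩ := Circle.exp_surjective μ
  exact ⟨Circle.exp (θ / 2), by rw [← Circle.exp_nsmul, nsmul_eq_mul]; congr 1; ring⟩

namespace Complex

/-- `doubleArg (r e^{iθ}) = r e^{2iθ}`; at `0` the junk value `0 / 0 = 0` is the right one. -/
def doubleArg (z : ℂ) : ℂ := z ^ 2 / ‖z‖

@[simp] lemma doubleArg_zero : doubleArg 0 = 0 := by simp [doubleArg]

@[simp] lemma norm_doubleArg (z : ℂ) : ‖doubleArg z‖ = ‖z‖ := by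
  rcases eq_or_ne z 0 with rfl | hz
  · simp
  · rw [doubleArg, norm_div, norm_pow, norm_real, norm_norm, sq, mul_div_assoc,
      div_self (norm_ne_zero_iff.2 hz), mul_one]

lemma doubleArg_mul_norm (z : ℂ) : doubleArg z * ‖z‖ = z ^ 2 := by
  rcases eq_or_ne z 0 with rfl | hz
  · simp
  · exact div_mul_cancel₀ _ (ofReal_ne_zero.2 (norm_ne_zero_iff.2 hz))

lemma doubleArg_circle_mul (c : Circle) (z : ℂ) : doubleArg (c * z) = c ^ 2 * doubleArg z := by
  simp only [doubleArg, mul_pow, norm_mul, Circle.norm_coe, one_mul, mul_div_assoc]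

lemma continuous_doubleArg : Continuous doubleArg := by
  refine continuous_iff_continuousAt.2 fun z => ?_
  rcases eq_or_ne z 0 with rfl | hz
  · rw [ContinuousAt, doubleArg_zero, tendsto_zero_iff_norm_tendsto_zero]
    simpa only [norm_doubleArg] using continuous_norm.tendsto' (0 : ℂ) 0 norm_zero
  · exact ContinuousAt.div (by fun_prop) (by fun_prop) (ofReal_ne_zero.2 (norm_ne_zero_iff.2 hz))

lemma doubleArg_surjective : Function.Surjective doubleArg := by
  intro w
  obtain ⟨s, hs⟩ := IsAlgClosed.exists_pow_nat_eq ((‖w‖ : ℂ) * w) two_pos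
  have hsw : ‖s‖ = ‖w‖ := by
    have : ‖s‖ ^ 2 = ‖w‖ ^ 2 := by rw [← norm_pow, hs, norm_mul, norm_real, norm_norm, sq]
    exact (sq_eq_sq₀ (norm_nonneg _) (norm_nonneg _)).1 this
  refine ⟨s, ?_⟩
  rcases eq_or_ne w 0 with rfl | hw
  · rw [norm_zero, norm_eq_zero] at hsw
    simp [hsw]
  · rw [doubleArg, hs, hsw, mul_div_cancel_left₀ _ (ofReal_ne_zero.2 (norm_ne_zero_iff.2 hw))]

lemma exists_circle_of_doubleArg_eq {z z' : ℂ} {μ : Circle}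
    (h : doubleArg z' = μ * doubleArg z) : ∃ c : Circle, c ^ 2 = μ ∧ z' = c * z := by
  have hnorm : ‖z'‖ = ‖z‖ := by
    simpa only [norm_doubleArg, norm_mul, Circle.norm_coe, one_mul] using congrArg norm h
  have hsq : z' ^ 2 = μ * z ^ 2 := by
    rw [← doubleArg_mul_norm, ← doubleArg_mul_norm z, h, hnorm, mul_assoc]
  obtain ⟨c, rfl⟩ := Circle.exists_sq_eq μ
  have : (z' - c * z) * (z' + c * z) = 0 := by
    push_cast at hsq
    linear_combination hsq
  rcases mul_eq_zero.1 this with h | h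
  · exact ⟨c, rfl, sub_eq_zero.1 h⟩
  · exact ⟨-c, by rw [neg_sq], by push_cast; linear_combination h⟩

end Complex

section

variable {k : ℕ}

def doubleLastArg (z : EuclideanSpace ℂ (Fin (k + 1))) : EuclideanSpace ℂ (Fin (k + 1)) :=
  WithLp.toLp 2 fun j => if j = Fin.last k then doubleArg (z j) else z j

lemma norm_doubleLastArg (z : EuclideanSpace ℂ (Fin (k + 1))) : ‖doubleLastArg z‖ = ‖z‖ := by
  simp only [EuclideanSpace.norm_eq, doubleLastArg]
  congr 1
  refine Finset.sum_congr rfl fun j _ => ?_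
  split_ifs <;> simp

lemma continuous_doubleLastArg : Continuous (doubleLastArg (k := k)) := by
  refine (PiLp.continuous_toLp 2 _).comp (continuous_pi fun j => ?_)
  have hj : Continuous fun z : EuclideanSpace ℂ (Fin (k + 1)) => z j :=
    (continuous_apply j).comp (PiLp.continuous_ofLp 2 _)
  split_ifs
  exacts [continuous_doubleArg.comp hj, hj]

lemma doubleLastArg_surjective : Function.Surjective (doubleLastArg (k := k)) := by
  intro w
  obtain ⟨s, hs⟩ := doubleArg_surjective (w (Fin.last k))
  refine ⟨WithLp.toLp 2 (Function.update w.ofLp (Fin.last k) s), ?_⟩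
  ext j
  by_cases hj : j = Fin.last k <;> simp [doubleLastArg, hj, hs]

lemma doubleLastArg_weightedSmul (c : Circle) (z : EuclideanSpace ℂ (Fin (k + 1))) :
    doubleLastArg (weightedSmul k c z) = diagonalSmul k (c ^ 2) (doubleLastArg z) := by
  ext j
  by_cases hj : j = Fin.last k <;>
    simp [doubleLastArg, weightedSmul, diagonalSmul, hj, doubleArg_circle_mul]

lemma exists_weightedSmul_of_doubleLastArg_eq {z z' : EuclideanSpace ℂ (Fin (k + 1))}
    {μ : Circle} (h : doubleLastArg z' = diagonalSmul k μ (doubleLastArg z)) :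
    ∃ c : Circle, z' = weightedSmul k c z := by
  have hj : ∀ j, doubleLastArg z' j = μ * doubleLastArg z j := fun j => by rw [h]; rfl
  obtain ⟨c, hcμ, hc⟩ :=
    exists_circle_of_doubleArg_eq (by simpa [doubleLastArg] using hj (Fin.last k))
  refine ⟨c, ?_⟩
  ext j
  by_cases hjl : j = Fin.last k
  · subst hjl
    simpa [weightedSmul] using hc
  · simpa [weightedSmul, doubleLastArg, hjl, ← hcμ] using hj j

lemma diagonalSmul_eq_smul (c : Circle) (z : EuclideanSpace ℂ (Fin (k + 1))) :
    diagonalSmul k c z = c • z :=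
  rfl

lemma equivalence_diagonalOrbitRel : Equivalence (diagonalOrbitRel k) where
  refl z := ⟨1, by rw [diagonalSmul_eq_smul, one_smul]⟩
  symm := fun ⟨c, hc⟩ =>
    ⟨c⁻¹, by rw [diagonalSmul_eq_smul, hc, diagonalSmul_eq_smul, inv_smul_smul]⟩
  trans := fun ⟨c, hc⟩ ⟨d, hd⟩ => ⟨d * c, by simp only [diagonalSmul_eq_smul, hd, hc, mul_smul]⟩

def sphereDoubleLastArg (z : ComplexUnitSphere k) : ComplexUnitSphere k :=
  ⟨doubleLastArg z, by simp [norm_doubleLastArg]⟩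

lemma isQuotientMap_sphereDoubleLastArg : IsQuotientMap (sphereDoubleLastArg (k := k)) := by
  have hc : Continuous (sphereDoubleLastArg (k := k)) :=
    (continuous_doubleLastArg.comp continuous_subtype_val).subtype_mk _
  refine hc.isClosedMap.isQuotientMap hc fun w => ?_
  obtain ⟨z, hz⟩ := doubleLastArg_surjective (w : EuclideanSpace ℂ (Fin (k + 1)))
  exact ⟨⟨z, by simpa [← hz, norm_doubleLastArg] using w.2⟩, Subtype.ext hz⟩

lemma weightedOrbitRel_iff_diagonalOrbitRel (z z' : ComplexUnitSphere k) :
    weightedOrbitRel k z z' ↔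
      diagonalOrbitRel k (sphereDoubleLastArg z) (sphereDoubleLastArg z') :=
  ⟨fun ⟨c, hc⟩ => ⟨c ^ 2, by simp only [sphereDoubleLastArg, hc, doubleLastArg_weightedSmul]⟩,
    fun ⟨_, hμ⟩ => exists_weightedSmul_of_doubleLastArg_eq hμ⟩

end

theorem weightedProjectiveSpace_homeomorph_complexProjectiveSpace_general (k : ℕ) :
    Nonempty (WeightedProjectiveSpace k ≃ₜ ComplexProjectiveSpace k) :=
  ⟨isQuotientMap_sphereDoubleLastArg.quotHomeomorph equivalence_diagonalOrbitRel
    weightedOrbitRel_iff_diagonalOrbitRel⟩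

/-- For `k ≥ 1`, the weighted projective space `CP^k_w` with weight
vector `w = (2, …, 2, 1)` is homeomorphic to the complex projective space `ℂP^k`. -/
theorem weightedProjectiveSpace_homeomorph_complexProjectiveSpace (k : ℕ) (hk : 1 ≤ k) :
    Nonempty (WeightedProjectiveSpace k ≃ₜ ComplexProjectiveSpace k) :=
  weightedProjectiveSpace_homeomorph_complexProjectiveSpace_general k
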